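/- arXiv:2505.13640 — 2 statements merged into one kernel-verified Lean document; each statement's English description precedes it below -/
import Mathlib

section
/- For every integer h ≥ 4, there exists a 2-dimensional binary word W : Fin h × Fin 4 → Bool in which every filled cell has at most 2 filled orthogonal neighbors, and whose number of filled cells equals 8h/3 + 4/3 if h ≡ 1 (mod 3), 8h/3 + 1 if h ≡ 0 (mod 3), and 8h/3 + 2/3 if h ≡ 2 (mod 3). -/
abbrev cellAdj {h w : ℕ} (p q : Fin h × Fin w) : Prop :=
  (p.1 = q.1 ∧ (p.2.val + 1 = q.2.val ∨ q.2.val + 1 = p.2.val)) ∨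
  (p.2 = q.2 ∧ (p.1.val + 1 = q.1.val ∨ q.1.val + 1 = p.1.val))

/-- number of filled orthogonal neighbors of `p` -/
def degW {h w : ℕ} (W : Fin h × Fin w → Bool) (p : Fin h × Fin w) : ℕ :=
  (Finset.univ.filter (fun q => cellAdj p q ∧ W q = true)).card

/-- every filled cell has at most `d` filled orthogonal neighbors -/
def degLEW {h w : ℕ} (W : Fin h × Fin w → Bool) (d : ℕ) : Prop :=
  ∀ p, W p = true → degW W p ≤ d

/-- number of filled cells -/
def filledCount {h w : ℕ} (W : Fin h × Fin w → Bool) : ℕ :=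
  (Finset.univ.filter (fun p => W p = true)).card

/-!
Fill the rows with `XXXX`, `X..X` and then, periodically, `X.XX`, `.XX.`, `XX.X`; when
`h ≡ 1 (mod 3)` close the grid with the mirror image `X..X`, `XXXX` of the two top rows.
This pattern has no T-junctions (no filled cell with both vertical neighbours and a horizontal
one filled, or both horizontal neighbours and a vertical one), so every degree is at most 2.
The two top rows carry 6 cells and every period 8 cells, giving `(8n + 3) / 3` cells in the
first `n ≥ 2` rows.
-/

open Finset

section Grid

variable {h w : ℕ}

def filledNbrCount (h w : ℕ) (g : ℕ → ℕ → Bool) (r c : ℕ) : ℕ :=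
  (if 0 < r ∧ g (r - 1) c then 1 else 0) + (if r + 1 < h ∧ g (r + 1) c then 1 else 0) +
  (if 0 < c ∧ g r (c - 1) then 1 else 0) + (if c + 1 < w ∧ g r (c + 1) then 1 else 0)

theorem degW_le_filledNbrCount (g : ℕ → ℕ → Bool) (p : Fin h × Fin w) :
    degW (fun q => g q.1 q.2) p ≤ filledNbrCount h w g p.1 p.2 := by
  classical
  obtain ⟨⟨r, hr⟩, ⟨c, hc⟩⟩ := p
  let cand (P : Prop) [Decidable P] (x : ℕ × ℕ) : Finset (ℕ × ℕ) :=
    ({x} : Finset _).filter fun _ => P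
  have card_cand (P : Prop) [Decidable P] (x : ℕ × ℕ) :
      (cand P x).card = if P then 1 else 0 := by
    simp only [cand, card_filter, sum_singleton]
  calc degW (fun q => g q.1 q.2) (⟨r, hr⟩, ⟨c, hc⟩)
      ≤ (cand (0 < r ∧ g (r - 1) c) (r - 1, c) ∪
          cand (r + 1 < h ∧ g (r + 1) c) (r + 1, c) ∪
          cand (0 < c ∧ g r (c - 1)) (r, c - 1) ∪
          cand (c + 1 < w ∧ g r (c + 1)) (r, c + 1)).card := by
        refine card_le_card_of_injOn (fun q => (q.1.val, q.2.val)) ?_ ?_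
        · rintro ⟨⟨a, ha⟩, ⟨b, hb⟩⟩ hq
          simp only [coe_filter, Set.mem_ofPred_eq, mem_univ, true_and, cellAdj, Fin.mk.injEq] at hq
          simp only [cand, coe_union, coe_filter, mem_singleton, Set.mem_union, Set.mem_ofPred_eq,
            Prod.mk.injEq]
          obtain ⟨⟨rfl, rfl | rfl⟩ | ⟨rfl, rfl | rfl⟩, hg⟩ := hq <;> simp_all
        · rintro ⟨⟨a, ha⟩, ⟨b, hb⟩⟩ - ⟨⟨a', ha'⟩, ⟨b', hb'⟩⟩ - hq
          simp_all
    _ ≤ (cand (0 < r ∧ g (r - 1) c) (r - 1, c)).card +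
          (cand (r + 1 < h ∧ g (r + 1) c) (r + 1, c)).card +
          (cand (0 < c ∧ g r (c - 1)) (r, c - 1)).card +
          (cand (c + 1 < w ∧ g r (c + 1)) (r, c + 1)).card := by
        grw [card_union_le, card_union_le, card_union_le]
    _ = filledNbrCount h w g r c := by simp only [card_cand, filledNbrCount]

theorem filledCount_eq_sum_card_filter (g : ℕ → ℕ → Bool) :
    filledCount (fun q : Fin h × Fin w => g q.1 q.2) =
      ∑ r ∈ range h, #{c ∈ range w | g r c} := by
  simp only [filledCount, card_filter, Fintype.sum_prod_type]
  rw [← Fin.sum_univ_eq_sum_range (fun r => ∑ c ∈ range w, if g r c then 1 else 0)]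
  simp only [← Fin.sum_univ_eq_sum_range (fun c => if g _ c then 1 else 0)]

end Grid

def stripes (r c : ℕ) : Bool :=
  if r = 0 then true
  else if r = 1 then c = 0 ∨ c = 3
  else if r % 3 = 2 then c ≠ 1
  else if r % 3 = 0 then c = 1 ∨ c = 2
  else c ≠ 2

def cappedStripes (h r c : ℕ) : Bool :=
  if h % 3 = 1 ∧ h - 2 ≤ r then stripes (h - 1 - r) c else stripes r c

theorem stripes_eq_true_iff {r c : ℕ} : stripes r c = true ↔
    r = 0 ∨ r = 1 ∧ (c = 0 ∨ c = 3) ∨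
      2 ≤ r ∧
        (r % 3 = 2 ∧ c ≠ 1 ∨ r % 3 = 0 ∧ (c = 1 ∨ c = 2) ∨ r % 3 = 1 ∧ c ≠ 2) := by
  unfold stripes
  split_ifs <;> simp_all <;> omega

theorem cappedStripes_eq_true_iff {h r c : ℕ} : cappedStripes h r c = true ↔
    h % 3 = 1 ∧ h - 2 ≤ r ∧ stripes (h - 1 - r) c ∨
      (h % 3 ≠ 1 ∨ r < h - 2) ∧ stripes r c := by
  unfold cappedStripes
  split_ifs with hcap
  · simp [hcap]
  · have : h % 3 ≠ 1 ∨ r < h - 2 := by omega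
    simp [this]
    omega

theorem ite_add_ite_add_ite_add_ite_le_two {a b c d : Prop} [Decidable a] [Decidable b]
    [Decidable c] [Decidable d] (hab : a → b → c ∨ d → False) (hcd : c → d → a ∨ b → False) :
    (if a then 1 else 0) + (if b then 1 else 0) + (if c then 1 else 0) +
      (if d then 1 else 0) ≤ 2 := by
  split_ifs <;> simp_all

theorem filledNbrCount_cappedStripes_le_two {h r c : ℕ} (hr : r < h) (hc : c < 4)
    (hp : cappedStripes h r c) :
    filledNbrCount h 4 (cappedStripes h) r c ≤ 2 := by
  refine ite_add_ite_add_ite_add_ite_le_two (fun hu hd hlr => ?_) (fun hl hri hud => ?_)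
  · simp only [cappedStripes_eq_true_iff, stripes_eq_true_iff] at hp hu hd hlr
    rcases hp with hp | hp <;> rcases hlr with hl | hri <;> omega
  · simp only [cappedStripes_eq_true_iff, stripes_eq_true_iff] at hp hl hri hud
    rcases hp with hp | hp <;> rcases hud with hu | hd <;> omega

theorem card_filter_stripes_of_two_le {r : ℕ} (hr : 2 ≤ r) :
    #{c ∈ range 4 | stripes r c} = if r % 3 = 0 then 2 else 3 := by
  have hr0 : r ≠ 0 := by omega
  have hr1 : r ≠ 1 := by omega
  have : r % 3 = 0 ∨ r % 3 = 1 ∨ r % 3 = 2 := by omega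
  rcases this with h3 | h3 | h3 <;> simp [stripes, hr0, hr1, h3] <;> decide

theorem sum_card_filter_stripes {n : ℕ} (hn : 2 ≤ n) :
    ∑ r ∈ range n, #{c ∈ range 4 | stripes r c} = (8 * n + 3) / 3 := by
  induction n, hn using Nat.le_induction with
  | base => decide
  | succ n hn ih =>
    rw [sum_range_succ, ih, card_filter_stripes_of_two_le hn]
    have : n % 3 = 0 ∨ n % 3 = 1 ∨ n % 3 = 2 := by omega
    rcases this with h3 | h3 | h3 <;> simp [h3] <;> omega

theorem sum_card_filter_cappedStripes {h : ℕ} (hh : 2 ≤ h) :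
    ∑ r ∈ range h, #{c ∈ range 4 | cappedStripes h r c} =
      if h % 3 = 1 then (8 * h + 4) / 3 else (8 * h + 3) / 3 := by
  split_ifs with h3
  · obtain ⟨m, rfl⟩ : ∃ m, h = m + 2 := ⟨h - 2, by omega⟩
    have rows_below (r : ℕ) (hr : r ∈ range m) : cappedStripes (m + 2) r = stripes r := by
      funext c
      simp [cappedStripes, show ¬m ≤ r from by simpa using hr]
    have row_m : cappedStripes (m + 2) m = stripes 1 := by funext c; simp [cappedStripes, h3]
    have row_m_succ : cappedStripes (m + 2) (m + 1) = stripes 0 := by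
      funext c; simp [cappedStripes, h3]
    rw [sum_range_succ, sum_range_succ, sum_congr rfl fun r hr => by rw [rows_below r hr], row_m,
      row_m_succ, sum_card_filter_stripes (by omega : 2 ≤ m)]
    have : #{c ∈ range 4 | stripes 1 c} + #{c ∈ range 4 | stripes 0 c} = 6 := by decide
    omega
  · simp only [cappedStripes, h3, false_and, if_false]
    exact sum_card_filter_stripes hh

theorem stmt9 (h : ℕ) (hh : 4 ≤ h) :
    ∃ W : Fin h × Fin 4 → Bool, degLEW W 2 ∧
      filledCount W =
        (if h % 3 = 1 then (8 * h + 4) / 3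
         else if h % 3 = 0 then (8 * h + 3) / 3
         else (8 * h + 2) / 3) := by
  refine ⟨fun q => cappedStripes h q.1 q.2, fun p hp => ?_, ?_⟩
  · exact (degW_le_filledNbrCount _ p).trans
      (filledNbrCount_cappedStripes_le_two p.1.isLt p.2.isLt hp)
  · rw [filledCount_eq_sum_card_filter, sum_card_filter_cappedStripes (by omega)]
    split_ifs <;> omega
end

section
/- Let h ≥ 4 be an integer and W : Fin h × Fin 4 → Bool with every filled cell having at most 2 filled orthogonal neighbors. Then the number of filled cells is at most (8h+4)/3 if h ≡ 1 (mod 3), at most (8h+3)/3 if h ≡ 0 (mod 3), and at most (8h+2)/3 if h ≡ 2 (mod 3). -/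
open Finset

/-!
The degree condition at a cell of row `i` only involves rows `i - 1`, `i`, `i + 1`, so the
number of filled cells is controlled by the max-plus transfer operator on pairs of consecutive
rows, `T v (b, c) = |c| + max {v (a, b) | a, b, c admissible}`, started from `v = 0` with two
empty rows above the grid. For width 4 a finite computation gives `T⁹ 0 ≤ T⁶ 0 + 8` pointwise.
As `T` is monotone and `T (v + k) ≤ T v + k`, this propagates to `T^(m + 3k) 0 ≤ T^m 0 + 8k`
for `m ≥ 6`, and the values of `T⁶ 0, T⁷ 0, T⁸ 0` at a pair of empty rows then give
`3 · #filled ≤ 8h + 4` for `h ≥ 4`, which is the claimed bound in each residue class.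
-/

section Transfer

variable {β : Type*} [Fintype β] (ok : β → β → β → Prop) [∀ a b c, Decidable (ok a b c)]
  (wt : β → ℕ)

def transferStep (v : β → β → ℕ) (b c : β) : ℕ :=
  wt c + ({a | ok a b c} : Finset β).sup fun a => v a b

def transferBound (n : ℕ) : β → β → ℕ :=
  (transferStep ok wt)^[n] 0

theorem transferBound_succ (n : ℕ) :
    transferBound ok wt (n + 1) = transferStep ok wt (transferBound ok wt n) :=
  Function.iterate_succ_apply' _ _ _

theorem transferStep_mono : Monotone (transferStep ok wt) :=
  fun _ _ hv b _ => Nat.add_le_add_left (sup_mono_fun fun a _ => hv a b) _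

theorem transferStep_add_le (v : β → β → ℕ) (k : ℕ) (b c : β) :
    transferStep ok wt (fun a b => v a b + k) b c ≤ transferStep ok wt v b c + k := by
  have : (({a | ok a b c} : Finset β).sup fun a => v a b + k) ≤
      (({a | ok a b c} : Finset β).sup fun a => v a b) + k :=
    Finset.sup_le fun a ha => Nat.add_le_add_right (le_sup (f := fun a => v a b) ha) k
  dsimp only [transferStep]
  omega

theorem sum_le_transferBound (s : ℕ → β) (n : ℕ)
    (hs : ∀ i < n, ok (s i) (s (i + 1)) (s (i + 2))) :
    ∑ i ∈ range n, wt (s (i + 2)) ≤ transferBound ok wt n (s n) (s (n + 1)) := by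
  induction n with
  | zero => simp
  | succ n ih =>
    rw [sum_range_succ, transferBound_succ, transferStep, add_comm]
    gcongr
    exact (ih fun i hi => hs i (by omega)).trans
      (le_sup (f := fun a => transferBound ok wt n a (s (n + 1))) (by simpa using hs n (by omega)))

variable {ok wt}

theorem transferBound_add_le {N p c : ℕ}
    (hN : ∀ a b, transferBound ok wt (N + p) a b ≤ transferBound ok wt N a b + c)
    {m : ℕ} (hm : N ≤ m) (a b : β) :
    transferBound ok wt (m + p) a b ≤ transferBound ok wt m a b + c := by
  obtain ⟨t, rfl⟩ := Nat.exists_eq_add_of_le hm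
  clear hm
  induction t generalizing a b with
  | zero => exact hN a b
  | succ t ih =>
    rw [show N + (t + 1) + p = N + t + p + 1 by omega, ← add_assoc, transferBound_succ,
      transferBound_succ]
    exact (transferStep_mono ok wt (fun a b => ih a b) a b).trans
      (transferStep_add_le ok wt _ c a b)

theorem transferBound_add_mul_le {N p c : ℕ}
    (hN : ∀ a b, transferBound ok wt (N + p) a b ≤ transferBound ok wt N a b + c)
    {m : ℕ} (hm : N ≤ m) (k : ℕ) (a b : β) :
    transferBound ok wt (m + p * k) a b ≤ transferBound ok wt m a b + c * k := by
  induction k generalizing a b with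
  | zero => simp
  | succ k ih =>
    rw [Nat.mul_succ, ← add_assoc, Nat.mul_succ]
    have := transferBound_add_le hN (m := m + p * k) (by omega) a b
    have := ih a b
    omega

end Transfer

def nbrCount {n : ℕ} (f : Fin n → Bool) (i : Fin n) : ℕ :=
  #{k | (i.val + 1 = k.val ∨ k.val + 1 = i.val) ∧ f k = true}

theorem degW_eq_nbrCount_add {h w : ℕ} (W : Fin h × Fin w → Bool) (p : Fin h × Fin w) :
    degW W p = nbrCount (fun y => W (p.1, y)) p.2 + nbrCount (fun x => W (x, p.2)) p.1 := by
  rw [degW, filter_congr (fun q _ => or_and_right), filter_or, card_union_of_disjoint]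
  · congr 1
    · refine card_nbij' Prod.snd (fun y => (p.1, y)) ?_ ?_ ?_ ?_ <;> intro q <;> simp +contextual
    · refine card_nbij' Prod.fst (fun x => (x, p.2)) ?_ ?_ ?_ ?_ <;> intro q <;> simp +contextual
  · rw [disjoint_filter]
    rintro q - ⟨⟨h1, -⟩, -⟩ ⟨⟨-, h2 | h2⟩, -⟩ <;> rw [h1] at h2 <;> omega

def extendByFalse {n : ℕ} (f : Fin n → Bool) (k : ℤ) : Bool :=
  if hk : 0 ≤ k ∧ k < n then f ⟨k.toNat, by omega⟩ else false

theorem card_filter_cast_eq_and {n : ℕ} (f : Fin n → Bool) (m : ℤ) :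
    #{k : Fin n | (k : ℤ) = m ∧ f k = true} = (extendByFalse f m).toNat := by
  unfold extendByFalse
  split_ifs with hm
  · have : ({k : Fin n | (k : ℤ) = m ∧ f k = true} : Finset _) =
        ({⟨m.toNat, by omega⟩} : Finset (Fin n)).filter (f · = true) := by
      ext k; simp [Fin.ext_iff]; omega
    rw [this, filter_singleton]
    split <;> simp_all
  · rw [Bool.toNat_false, card_eq_zero, filter_eq_empty_iff]
    rintro k - ⟨rfl, -⟩
    omega

theorem nbrCount_eq_extendByFalse {n : ℕ} (f : Fin n → Bool) (i : Fin n) :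
    nbrCount f i = (extendByFalse f (i - 1)).toNat + (extendByFalse f (i + 1)).toNat := by
  rw [← card_filter_cast_eq_and, ← card_filter_cast_eq_and, nbrCount, ← card_union_of_disjoint]
  · congr 1; ext k
    simp only [mem_filter, mem_univ, true_and, mem_union, ← or_and_right]
    exact and_congr_left fun _ => by omega
  · rw [disjoint_filter]; rintro k - ⟨hk, -⟩ ⟨hk', -⟩; omega

def gridRow {h w : ℕ} (W : Fin h × Fin w → Bool) (i : ℤ) : Fin w → Bool :=
  fun j => extendByFalse (fun x => W (x, j)) i

theorem gridRow_natCast {h w : ℕ} (W : Fin h × Fin w → Bool) (x : Fin h) :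
    gridRow W (x : ℕ) = fun y => W (x, y) := by
  funext y
  simp [gridRow, extendByFalse]

theorem gridRow_of_not_mem {h w : ℕ} (W : Fin h × Fin w → Bool) {i : ℤ}
    (hi : ¬ (0 ≤ i ∧ i < h)) : gridRow W i = fun _ => false := by
  funext y
  simp [gridRow, extendByFalse, hi]

def rowCount {w : ℕ} (r : Fin w → Bool) : ℕ :=
  #{j | r j = true}

def RowDegLE {w : ℕ} (d : ℕ) (a b c : Fin w → Bool) : Prop :=
  ∀ j, b j = true → (a j).toNat + (c j).toNat + nbrCount b j ≤ d

instance {w : ℕ} (d : ℕ) (a b c : Fin w → Bool) : Decidable (RowDegLE d a b c) := by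
  unfold RowDegLE; infer_instance

theorem rowDegLE_gridRow {h w d : ℕ} {W : Fin h × Fin w → Bool} (hW : degLEW W d) (i : ℤ) :
    RowDegLE d (gridRow W (i - 1)) (gridRow W i) (gridRow W (i + 1)) := by
  intro j hj
  by_cases hi : 0 ≤ i ∧ i < h
  · obtain ⟨x, rfl⟩ : ∃ x : Fin h, ((x : ℕ) : ℤ) = i := ⟨⟨i.toNat, by omega⟩, by simp; omega⟩
    rw [gridRow_natCast] at hj ⊢
    have := hW (x, j) hj
    rw [degW_eq_nbrCount_add, nbrCount_eq_extendByFalse (fun x => W (x, j)) x] at this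
    dsimp only [gridRow] at this ⊢
    omega
  · simp [gridRow_of_not_mem W hi] at hj

theorem filledCount_eq_sum_rowCount {h w : ℕ} (W : Fin h × Fin w → Bool) {n : ℕ} (hn : h ≤ n) :
    filledCount W = ∑ i ∈ range n, rowCount (gridRow W i) := by
  have hrows : filledCount W = ∑ i ∈ range h, rowCount (gridRow W i) := by
    rw [← Fin.sum_univ_eq_sum_range (fun i => rowCount (gridRow W i)), filledCount,
      card_filter, Fintype.sum_prod_type]
    simp only [gridRow_natCast, rowCount, card_filter]
  rw [hrows]
  refine sum_subset (range_subset_range.2 hn) fun i _ hi => ?_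
  rw [gridRow_of_not_mem W (by simp at hi; omega)]
  simp [rowCount]

-- Rows of width 4 are encoded as 4-bit numbers so that the kernel can evaluate `stripBound`.
def decodeRow (k : Fin 16) : Fin 4 → Bool :=
  fun j => k.val.testBit j

theorem decodeRow_bijective : Function.Bijective decodeRow := by
  decide

def stripBound : ℕ → Fin 16 → Fin 16 → ℕ :=
  transferBound (fun a b c => RowDegLE 2 (decodeRow a) (decodeRow b) (decodeRow c))
    (fun a => rowCount (decodeRow a))

theorem stripBound_add_three_le : ∀ a b, stripBound (6 + 3) a b ≤ stripBound 6 a b + 8 := by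
  decide +kernel

theorem three_mul_stripBound_le : ∀ t < 3, 3 * stripBound (6 + t) 0 0 ≤ 8 * t + 36 := by
  decide +kernel

theorem three_mul_filledCount_le {h : ℕ} (hh : 4 ≤ h) {W : Fin h × Fin 4 → Bool}
    (hW : degLEW W 2) : 3 * filledCount W ≤ 8 * h + 4 := by
  let e := Equiv.ofBijective decodeRow decodeRow_bijective
  let s : ℕ → Fin 16 := fun k => e.symm (gridRow W (k - 2))
  have hdecode (k : ℕ) : decodeRow (s k) = gridRow W (k - 2) := e.apply_symm_apply _
  have hblank (k : ℕ) (hk : h + 2 ≤ k) : s k = 0 := by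
    rw [e.symm_apply_eq, gridRow_of_not_mem W (by omega)]
    funext j; fin_cases j <;> rfl
  have hs (i : ℕ) :
      RowDegLE 2 (decodeRow (s i)) (decodeRow (s (i + 1))) (decodeRow (s (i + 2))) := by
    rw [hdecode, hdecode, hdecode]
    convert rowDegLE_gridRow hW (i - 1) using 2 <;> push_cast <;> ring
  have hsum :
      ∑ i ∈ range (h + 2), rowCount (decodeRow (s (i + 2))) ≤ stripBound (h + 2) 0 0 := by
    have := sum_le_transferBound
      (fun a b c => RowDegLE 2 (decodeRow a) (decodeRow b) (decodeRow c))
      (fun a => rowCount (decodeRow a)) s (h + 2) fun i _ => hs i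
    rwa [hblank (h + 2) le_rfl, hblank (h + 2 + 1) (by omega)] at this
  have hcount : filledCount W = ∑ i ∈ range (h + 2), rowCount (decodeRow (s (i + 2))) := by
    simp [filledCount_eq_sum_rowCount W (n := h + 2) (by omega), hdecode]
  obtain ⟨k, t, ht, hk⟩ : ∃ k t, t < 3 ∧ h + 2 = 6 + t + 3 * k :=
    ⟨(h - 4) / 3, (h - 4) % 3, by omega, by omega⟩
  have hper : stripBound (h + 2) 0 0 ≤ stripBound (6 + t) 0 0 + 8 * k :=
    hk ▸ transferBound_add_mul_le stripBound_add_three_le (by omega) k 0 0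
  have hbase := three_mul_stripBound_le t ht
  omega

theorem stmt10 (h : ℕ) (hh : 4 ≤ h) (W : Fin h × Fin 4 → Bool) (hdeg : degLEW W 2) :
    filledCount W ≤
      (if h % 3 = 1 then (8 * h + 4) / 3
       else if h % 3 = 0 then (8 * h + 3) / 3
       else (8 * h + 2) / 3) := by
  have := three_mul_filledCount_le hh hdeg
  split_ifs <;> omega
end
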